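/- Every locally finite simple graph on a countable vertex set that satisfies condition (A) has a perfect matching. -/

import Mathlib

namespace PaperMatchings

variable {V : Type*}

/-- The support of a set of edges: all vertices incident to some edge in `M`. -/
def supp (M : Set (Sym2 V)) : Set V := {v | ∃ e ∈ M, v ∈ e}

/-- `M` is a matching of `G`: a set of edges of `G` such that no vertex is
incident to more than one edge of `M`. -/
def IsMatching (G : SimpleGraph V) (M : Set (Sym2 V)) : Prop :=
  M ⊆ G.edgeSet ∧ ∀ (v : V), ∀ e ∈ M, ∀ e' ∈ M, v ∈ e → v ∈ e' → e = e'

/-- A perfect matching: a matching whose support is all of `V`. -/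
def IsPerfectMatching (G : SimpleGraph V) (M : Set (Sym2 V)) : Prop :=
  IsMatching G M ∧ supp M = Set.univ

/-- A (finite or infinite) path in `G`, given by its number of vertices `n : ℕ∞`
(`⊤` meaning infinite) and the enumeration `f` of its vertices: it is injective on
indices below `n` and consecutive vertices are adjacent. -/
def IsPath (G : SimpleGraph V) (n : ℕ∞) (f : ℕ → V) : Prop :=
  1 ≤ n ∧
  (∀ i j : ℕ, (i : ℕ∞) < n → (j : ℕ∞) < n → f i = f j → i = j) ∧
  (∀ i : ℕ, ((i : ℕ∞) + 1) < n → G.Adj (f i) (f (i + 1)))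

/-- The consecutive edges of the path lie alternately in `M` and outside `M`. -/
def IsAlternating (M : Set (Sym2 V)) (n : ℕ∞) (f : ℕ → V) : Prop :=
  ∀ i : ℕ, ((i : ℕ∞) + 2) < n →
    (s(f i, f (i + 1)) ∈ M ↔ s(f (i + 1), f (i + 2)) ∉ M)

/-- An `M`-augmenting path starting at `s`: an `M`-alternating path (with at least one
edge) starting at the unmatched vertex `s`, which is either infinite or ends at an
unmatched vertex. -/
def IsAugmentingPath (G : SimpleGraph V) (M : Set (Sym2 V)) (n : ℕ∞) (f : ℕ → V)
    (s : V) : Prop :=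
  IsPath G n f ∧ IsAlternating M n f ∧ 1 < n ∧ f 0 = s ∧ s ∉ supp M ∧
  ∀ k : ℕ, n = (k : ℕ∞) + 1 → f k ∉ supp M

/-- The path contains at least one edge of `M`. -/
def IsProper (M : Set (Sym2 V)) (n : ℕ∞) (f : ℕ → V) : Prop :=
  ∃ i : ℕ, ((i : ℕ∞) + 1) < n ∧ s(f i, f (i + 1)) ∈ M

/-- Condition (A): for every matching `M` and every vertex `s` not in the support
of `M` there is an `M`-augmenting path starting at `s`. -/
def ConditionA (G : SimpleGraph V) : Prop :=
  ∀ M : Set (Sym2 V), IsMatching G M → ∀ s : V, s ∉ supp M →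
    ∃ (n : ℕ∞) (f : ℕ → V), IsAugmentingPath G M n f s

/-- An independent matching: a matching admitting no proper augmenting path. -/
def IndepMatching (G : SimpleGraph V) (M : Set (Sym2 V)) : Prop :=
  IsMatching G M ∧
    ¬ ∃ (s : V) (n : ℕ∞) (f : ℕ → V), IsAugmentingPath G M n f s ∧ IsProper M n f

/-- The induced subgraph of `G` on the vertex set `S` (vertices outside `S`
become isolated). -/
def restrict (G : SimpleGraph V) (S : Set V) : SimpleGraph V where
  Adj u v := G.Adj u v ∧ u ∈ S ∧ v ∈ S
  symm := by
    constructor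
    intro u v h
    exact ⟨h.1.symm, h.2.2, h.2.1⟩
  loopless := by
    constructor
    intro v h
    exact G.irrefl h.1

/-- `W` is an independent subgraph of `G`: the induced subgraph `G[W]` has a perfect
matching (i.e. `G` has a matching with support exactly `W`) and every such matching
is an independent matching of `G`. -/
def IndepSubgraph (G : SimpleGraph V) (W : Set V) : Prop :=
  (∃ M, IsMatching G M ∧ supp M = W) ∧
  ∀ M, IsMatching G M → supp M = W → IndepMatching G M

/-- The induced subgraph `G[W]` satisfies condition (A): for every matching of
`G[W]` and every vertex of `W` not in its support, there is an augmenting path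
inside `G[W]`. -/
def ConditionAOn (G : SimpleGraph V) (W : Set V) : Prop :=
  ∀ M : Set (Sym2 V), IsMatching (restrict G W) M → ∀ s ∈ W, s ∉ supp M →
    ∃ (n : ℕ∞) (f : ℕ → V), IsAugmentingPath (restrict G W) M n f s


/-!
Flipping the edges of an `M`-augmenting path from `s` (taking the symmetric difference of `M`
with the path) gives a matching that covers `s` and everything `M` covers; this works for
infinite paths too, since every `M`-edge meeting the path lies on it. Enumerating the countably
many vertices and flipping repeatedly produces matchings `M₀, M₁, …` with growing supports
that eventually cover each vertex. Along an ultrafilter, the edges lying in almost all `Mₖ` form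
a matching, and by local finiteness some edge at each vertex `v` lies in almost all `Mₖ`, so
this limit matching is perfect.
-/

open scoped symmDiff

def pathEdges (n : ℕ∞) (f : ℕ → V) : Set (Sym2 V) :=
  {e | ∃ i : ℕ, (i : ℕ∞) + 1 < n ∧ e = s(f i, f (i + 1))}

lemma exists_index_of_mem_edge {n : ℕ∞} {f : ℕ → V} {v : V} {i : ℕ}
    (hi : (i : ℕ∞) + 1 < n) (hv : v ∈ s(f i, f (i + 1))) :
    ∃ a : ℕ, v = f a ∧ (a : ℕ∞) < n ∧ (a = i ∨ a = i + 1) := by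
  rcases Sym2.mem_iff.mp hv with rfl | rfl
  · exact ⟨i, rfl, lt_of_le_of_lt le_self_add hi, Or.inl rfl⟩
  · exact ⟨i + 1, rfl, by exact_mod_cast hi, Or.inr rfl⟩

lemma IsMatching.empty (G : SimpleGraph V) : IsMatching G ∅ :=
  ⟨Set.empty_subset _, fun _ _ he => he.elim⟩

section Augmentation

variable {G : SimpleGraph V} {M : Set (Sym2 V)} {n : ℕ∞} {f : ℕ → V} {s : V}

namespace IsAugmentingPath

theorem edge_mem_iff_odd (hP : IsAugmentingPath G M n f s) {i : ℕ} (hi : (i : ℕ∞) + 1 < n) :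
    s(f i, f (i + 1)) ∈ M ↔ Odd i := by
  obtain ⟨-, alt, -, rfl, hs, -⟩ := hP
  induction i with
  | zero => exact iff_of_false (fun h => hs ⟨_, h, Sym2.mem_mk_left _ _⟩) (by simp)
  | succ i ih =>
    have hi2 : (i : ℕ∞) + 2 < n := by convert hi using 1; push_cast; ring
    rw [Nat.odd_add_one, ← ih (lt_of_le_of_lt (by gcongr; norm_num) hi2)]
    have := alt i hi2
    tauto

lemma add_one_lt_of_mem_supp (hP : IsAugmentingPath G M n f s) {a : ℕ} (ha : (a : ℕ∞) < n)
    (hfa : f a ∈ supp M) : (a : ℕ∞) + 1 < n :=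
  (ENat.natCast_add_one_le_iff.mpr ha).lt_of_ne fun h => hP.2.2.2.2.2 a h.symm hfa

theorem exists_odd_edge_of_mem_supp (hP : IsAugmentingPath G M n f s) {a : ℕ}
    (ha : (a : ℕ∞) < n) (hfa : f a ∈ supp M) :
    ∃ b : ℕ, Odd b ∧ (b : ℕ∞) + 1 < n ∧ (a = b ∨ a = b + 1) := by
  have ⟨_, _, _, hf0, hs, _⟩ := hP
  obtain ⟨b, rfl⟩ : ∃ b, a = b + 1 := Nat.exists_eq_add_one.mpr <| Nat.pos_of_ne_zero <| by
    rintro rfl; exact hs (hf0 ▸ hfa)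
  rcases Nat.even_or_odd b with hb | hb
  · exact ⟨b + 1, hb.add_one, hP.add_one_lt_of_mem_supp ha hfa, Or.inl rfl⟩
  · exact ⟨b, hb, by exact_mod_cast ha, Or.inr rfl⟩

theorem exists_even_edge (hP : IsAugmentingPath G M n f s) {a : ℕ} (ha : (a : ℕ∞) < n)
    (hfa : a = 0 ∨ f a ∈ supp M) :
    ∃ i : ℕ, Even i ∧ (i : ℕ∞) + 1 < n ∧ (a = i ∨ a = i + 1) := by
  rcases Nat.even_or_odd a with ha' | ⟨i, rfl⟩
  · refine ⟨a, ha', ?_, Or.inl rfl⟩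
    rcases hfa with rfl | hfa
    · simpa using hP.2.2.1
    · exact hP.add_one_lt_of_mem_supp ha hfa
  · exact ⟨2 * i, even_two_mul i, by exact_mod_cast ha, Or.inr rfl⟩

lemma edge_notMem_of_even (hP : IsAugmentingPath G M n f s) {i : ℕ} (hi : (i : ℕ∞) + 1 < n)
    (heven : Even i) : s(f i, f (i + 1)) ∈ pathEdges n f \ M :=
  ⟨⟨i, hi, rfl⟩, fun h => Nat.not_odd_iff_even.mpr heven ((hP.edge_mem_iff_odd hi).mp h)⟩

theorem mem_pathEdges_of_mem (hM : IsMatching G M) (hP : IsAugmentingPath G M n f s) {e : Sym2 V}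
    (he : e ∈ M) {a : ℕ} (ha : (a : ℕ∞) < n) (hfa : f a ∈ e) : e ∈ pathEdges n f := by
  obtain ⟨b, hb, hbn, hab⟩ := hP.exists_odd_edge_of_mem_supp ha ⟨e, he, hfa⟩
  have hfab : f a ∈ s(f b, f (b + 1)) := by rcases hab with rfl | rfl <;> simp
  rw [hM.2 (f a) e he _ ((hP.edge_mem_iff_odd hbn).mpr hb) hfa hfab]
  exact ⟨b, hbn, rfl⟩

theorem eq_of_mem_pathEdges_diff (hP : IsAugmentingPath G M n f s) {e e' : Sym2 V} {v : V}
    (he : e ∈ pathEdges n f \ M) (he' : e' ∈ pathEdges n f \ M) (hv : v ∈ e) (hv' : v ∈ e') :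
    e = e' := by
  obtain ⟨⟨i, hi, rfl⟩, heM⟩ := he
  obtain ⟨⟨j, hj, rfl⟩, heM'⟩ := he'
  obtain ⟨a, rfl, ha, hai⟩ := exists_index_of_mem_edge hi hv
  obtain ⟨b, hab, hb, hbj⟩ := exists_index_of_mem_edge hj hv'
  have hi' := Nat.not_odd_iff_even.mp (mt (hP.edge_mem_iff_odd hi).mpr heM)
  have hj' := Nat.not_odd_iff_even.mp (mt (hP.edge_mem_iff_odd hj).mpr heM')
  obtain rfl := hP.1.2.1 a b ha hb hab
  obtain rfl : i = j := by rw [Nat.even_iff] at hi' hj'; omega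
  rfl

theorem isMatching_symmDiff (hM : IsMatching G M) (hP : IsAugmentingPath G M n f s) :
    IsMatching G (M ∆ pathEdges n f) := by
  refine ⟨?_, ?_⟩
  · rintro e (⟨he, -⟩ | ⟨⟨i, hi, rfl⟩, -⟩)
    exacts [hM.1 he, hP.1.2.2 i hi]
  · have mixed : ∀ {v e e'}, e ∈ M → e ∉ pathEdges n f → e' ∈ pathEdges n f →
        v ∈ e → v ∈ e' → False := by
      rintro v e _ he heP ⟨i, hi, rfl⟩ hv hv'
      obtain ⟨a, rfl, ha, -⟩ := exists_index_of_mem_edge hi hv'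
      exact heP (mem_pathEdges_of_mem hM hP he ha hv)
    rintro v e (⟨he, heP⟩ | he) e' (⟨he', heP'⟩ | he') hv hv'
    · exact hM.2 v e he e' he' hv hv'
    · exact (mixed he heP he'.1 hv hv').elim
    · exact (mixed he' heP' he.1 hv' hv).elim
    · exact hP.eq_of_mem_pathEdges_diff he he' hv hv'

theorem insert_supp_subset_supp_symmDiff (hP : IsAugmentingPath G M n f s) :
    insert s (supp M) ⊆ supp (M ∆ pathEdges n f) := by
  have covered : ∀ {a : ℕ}, (a : ℕ∞) < n → (a = 0 ∨ f a ∈ supp M) →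
      f a ∈ supp (M ∆ pathEdges n f) := by
    intro a ha hfa
    obtain ⟨i, hi, hin, hai⟩ := hP.exists_even_edge ha hfa
    refine ⟨_, Or.inr (hP.edge_notMem_of_even hin hi), ?_⟩
    rcases hai with rfl | rfl <;> simp
  rintro v (rfl | ⟨e, he, hv⟩)
  · have ⟨_, _, hn, hf0, _⟩ := hP
    exact hf0 ▸ covered (lt_of_le_of_lt (by simp) hn) (Or.inl rfl)
  · by_cases heP : e ∈ pathEdges n f
    · obtain ⟨i, hi, rfl⟩ := heP
      obtain ⟨a, rfl, ha, -⟩ := exists_index_of_mem_edge hi hv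
      exact covered ha (Or.inr ⟨_, he, hv⟩)
    · exact ⟨e, Or.inl ⟨he, heP⟩, hv⟩

end IsAugmentingPath

end Augmentation

theorem ConditionA.exists_isMatching_insert_supp {G : SimpleGraph V} (hA : ConditionA G)
    {M : Set (Sym2 V)} (hM : IsMatching G M) (v : V) :
    ∃ M', IsMatching G M' ∧ insert v (supp M) ⊆ supp M' := by
  by_cases hv : v ∈ supp M
  · exact ⟨M, hM, Set.insert_subset hv subset_rfl⟩
  · obtain ⟨n, f, hP⟩ := hA M hM v hv
    exact ⟨_, hP.isMatching_symmDiff hM, hP.insert_supp_subset_supp_symmDiff⟩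

open Filter

theorem exists_seq_isMatching_eventually_mem_supp [Countable V] {G : SimpleGraph V}
    (hext : ∀ M, IsMatching G M → ∀ v, ∃ M', IsMatching G M' ∧ insert v (supp M) ⊆ supp M') :
    ∃ Ms : ℕ → Set (Sym2 V), (∀ k, IsMatching G (Ms k)) ∧
      ∀ v, ∀ᶠ k in atTop, v ∈ supp (Ms k) := by
  cases isEmpty_or_nonempty V
  · exact ⟨fun _ => ∅, fun _ => IsMatching.empty G, isEmptyElim⟩
  obtain ⟨g, hg⟩ := exists_surjective_nat V
  choose next isMatching_next insert_subset_next using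
    fun (M : {M // IsMatching G M}) v => hext M.1 M.2 v
  let Ms : ℕ → {M // IsMatching G M} :=
    Nat.rec ⟨∅, IsMatching.empty G⟩ fun k M => ⟨next M (g k), isMatching_next M (g k)⟩
  have hmono : Monotone fun k => supp (Ms k).1 :=
    monotone_nat_of_le_succ fun k => (Set.subset_insert _ _).trans (insert_subset_next (Ms k) (g k))
  refine ⟨fun k => (Ms k).1, fun k => (Ms k).2, hg.forall.mpr fun k => ?_⟩
  filter_upwards [eventually_ge_atTop (k + 1)] with j hj
  exact hmono hj (insert_subset_next (Ms k) (g k) (Set.mem_insert _ _))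

section Limit

variable {ι : Type*} {G : SimpleGraph V} {Ms : ι → Set (Sym2 V)}

theorem isMatching_liminf (U : Ultrafilter ι) (hMs : ∀ k, IsMatching G (Ms k)) :
    IsMatching G (liminf Ms (U : Filter ι)) := by
  simp only [IsMatching, Set.subset_def, mem_liminf_iff_eventually_mem]
  refine ⟨fun e he => ?_, fun v e he e' he' hv hv' => ?_⟩
  · obtain ⟨k, hk⟩ := he.exists
    exact (hMs k).1 hk
  · obtain ⟨k, hk, hk'⟩ := (he.and he').exists
    exact (hMs k).2 v e hk e' hk' hv hv'

theorem mem_supp_liminf (U : Ultrafilter ι) (hMs : ∀ k, IsMatching G (Ms k)) {v : V}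
    (hv : (G.neighborSet v).Finite) (hcov : ∀ᶠ k in (U : Filter ι), v ∈ supp (Ms k)) :
    v ∈ supp (liminf Ms (U : Filter ι)) := by
  have : (⋃ w ∈ G.neighborSet v, {k | s(v, w) ∈ Ms k}) ∈ U := by
    refine mem_of_superset hcov fun k ⟨e, he, hve⟩ => ?_
    obtain ⟨w, rfl⟩ := Sym2.mem_iff_exists.mp hve
    exact Set.mem_biUnion ((hMs k).1 he) he
  obtain ⟨w, -, hw⟩ := (Ultrafilter.finite_biUnion_mem_iff hv).mp this
  exact ⟨s(v, w), mem_liminf_iff_eventually_mem.mpr hw, Sym2.mem_mk_left _ _⟩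

theorem exists_isPerfectMatching_of_eventually_mem_supp {l : Filter ι} [l.NeBot]
    (hLF : ∀ v, (G.neighborSet v).Finite) (hMs : ∀ k, IsMatching G (Ms k))
    (hcov : ∀ v, ∀ᶠ k in l, v ∈ supp (Ms k)) : ∃ M, IsPerfectMatching G M :=
  ⟨liminf Ms (Ultrafilter.of l : Filter ι), isMatching_liminf _ hMs,
    Set.eq_univ_of_forall fun v =>
      mem_supp_liminf _ hMs (hLF v) ((hcov v).filter_mono (Ultrafilter.of_le l))⟩

end Limit

/-- Every locally finite simple graph on a countable vertex set
satisfying condition (A) has a perfect matching. -/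
theorem locally_finite_perfect_matching {V : Type*} [Countable V] (G : SimpleGraph V)
    (hLF : ∀ v : V, (G.neighborSet v).Finite) (hA : ConditionA G) :
    ∃ M : Set (Sym2 V), IsPerfectMatching G M := by
  obtain ⟨Ms, hMs, hcov⟩ :=
    exists_seq_isMatching_eventually_mem_supp fun _ hM v => hA.exists_isMatching_insert_supp hM v
  exact exists_isPerfectMatching_of_eventually_mem_supp hLF hMs hcov

end PaperMatchings
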